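/- arXiv:1805.06293 — 2 statements merged into one kernel-verified Lean document; each statement's English description precedes it below -/
import Mathlib

section
/- Let Γ be a group and let f : Γ → ℂ be a parallelogram function. Then for all a, b, c ∈ Γ: f(a·bcb⁻¹c⁻¹) − f(a) = 2·f∘ε₃(a,b,c). -/
/-- The linearization of `f : Γ → ℂ` to a linear functional on the group algebra `ℂ[Γ]`. -/
noncomputable def lin {Γ : Type*} [Group Γ] (f : Γ → ℂ) : MonoidAlgebra ℂ Γ →ₗ[ℂ] ℂ :=
  Finsupp.linearCombination ℂ f ∘ₗ (MonoidAlgebra.coeffLinearEquiv ℂ).toLinearMap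

/-- `f∘ε₃(a,b,c) = f̂((a-1)(b-1)(c-1))`. -/
noncomputable def eps3 {Γ : Type*} [Group Γ] (f : Γ → ℂ) (a b c : Γ) : ℂ :=
  lin f ((MonoidAlgebra.of ℂ Γ a - 1) * (MonoidAlgebra.of ℂ Γ b - 1) *
    (MonoidAlgebra.of ℂ Γ c - 1))

lemma eps3_eq {Γ : Type*} [Group Γ] (f : Γ → ℂ) (a b c : Γ) :
    eps3 f a b c = f (a*b*c) - f (a*b) - f (a*c) - f (b*c) + f a + f b + f c - f 1 := by
  have hof : ∀ x : Γ, lin f (MonoidAlgebra.of ℂ Γ x) = f x := by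
    intro x
    show Finsupp.linearCombination ℂ f (Finsupp.single x (1:ℂ)) = f x
    rw [Finsupp.linearCombination_single, one_smul]
  have hone : lin f (1 : MonoidAlgebra ℂ Γ) = f 1 := by
    rw [show (1 : MonoidAlgebra ℂ Γ) = MonoidAlgebra.of ℂ Γ 1 from (map_one _).symm, hof]
  have expand : (MonoidAlgebra.of ℂ Γ a - 1) * (MonoidAlgebra.of ℂ Γ b - 1) *
      (MonoidAlgebra.of ℂ Γ c - 1) =
      MonoidAlgebra.of ℂ Γ (a*b*c) - MonoidAlgebra.of ℂ Γ (a*b) - MonoidAlgebra.of ℂ Γ (a*c)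
        - MonoidAlgebra.of ℂ Γ (b*c) + MonoidAlgebra.of ℂ Γ a + MonoidAlgebra.of ℂ Γ b
        + MonoidAlgebra.of ℂ Γ c - 1 := by
    simp only [sub_mul, mul_sub, one_mul, mul_one, map_mul]
    abel
  rw [eps3, expand]
  simp only [map_sub, map_add, hof, hone]

theorem parallelogram_commutator_formula {Γ : Type*} [Group Γ] (f : Γ → ℂ)
    (hf : ∀ x y : Γ, f (x * y) + f (x * y⁻¹) = 2 * f x + 2 * f y) :
    ∀ a b c : Γ, f (a * (b * c * b⁻¹ * c⁻¹)) - f a = 2 * eps3 f a b c := by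
  have h1 : f 1 = 0 := by
    have := hf 1 1
    simp only [mul_one, inv_one] at this
    linear_combination -this / 2
  have hinv : ∀ x : Γ, f x⁻¹ = f x := by
    intro x
    have := hf 1 x
    simp only [one_mul] at this
    rw [h1] at this
    linear_combination this
  have hcomm : ∀ x y : Γ, f (x * y) = f (y * x) := by
    intro x y
    have h2 := hf x y⁻¹
    have h3 := hf y x⁻¹
    rw [inv_inv, hinv y] at h2
    rw [inv_inv, hinv x] at h3
    have h4 : f (x * y⁻¹) = f (y * x⁻¹) := by
      rw [← hinv (x * y⁻¹)]
      congr 1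
      group
    linear_combination h2 - h3 - h4
  intro a b c
  have e1 : f (a*b*c*b⁻¹*c) + f (a*b*c*b⁻¹*c⁻¹) = 2 * f (a*b*c*b⁻¹) + 2 * f c :=
    hf (a*b*c*b⁻¹) c
  have e2 : f (a*b*c*b⁻¹) + f (a*b*c*b) = 2 * f (a*b*c) + 2 * f b := by
    have := hf (a*b*c) b⁻¹
    rw [inv_inv, hinv b] at this
    exact this
  have e3 : f (a*b*c*b⁻¹*c) + f (a*b*b) = 2 * f (a*b*c) + 2 * f (b⁻¹*c) := by
    have := hf (a*b*c) (b⁻¹*c)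
    rw [show a*b*c*(b⁻¹*c) = a*b*c*b⁻¹*c by group,
        show a*b*c*(b⁻¹*c)⁻¹ = a*b*b by group] at this
    exact this
  have e4 : f (a*b*c*b) + f (a*c⁻¹) = 2 * f (a*b) + 2 * f (b*c) := by
    have := hf (b*a) (b*c)
    rw [show b*a*(b*c) = b*(a*b*c) by group,
        show b*a*(b*c)⁻¹ = b*(a*c⁻¹*b⁻¹) by group,
        hcomm b (a*b*c), hcomm b (a*c⁻¹*b⁻¹),
        show a*c⁻¹*b⁻¹*b = a*c⁻¹ by group,
        hcomm b a] at this
    rw [show (a*b*c)*b = a*b*c*b by group] at this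
    exact this
  have e5 : f (a*b*b) + f a = 2 * f (a*b) + 2 * f b := by
    have := hf (a*b) b
    rw [show a*b*b⁻¹ = a by group] at this
    exact this
  have e6 : f (b⁻¹*c) + f (b*c) = 2 * f c + 2 * f b := by
    have := hf c b⁻¹
    rw [inv_inv, hinv b, hcomm c b⁻¹, hcomm c b] at this
    exact this
  have e7 : f (a*c) + f (a*c⁻¹) = 2 * f a + 2 * f c := hf a c
  rw [show a*(b*c*b⁻¹*c⁻¹) = a*b*c*b⁻¹*c⁻¹ by group, eps3_eq]
  linear_combination e1 + 2*e2 - e3 - 2*e4 + e5 - 2*e6 + 2*e7 + 2*h1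
end

section
/- Let n ∈ ℕ and let F = FreeGroup (Fin n) be the free group of rank n, with abelianization map σ : F → (Fin n → ℤ) sending a word to its vector of exponent sums. Let Φ : (Fin n → ℤ)³ → ℂ be additive in each of its three variables and alternating (Φ vanishes whenever two arguments coincide). Then there exists a parallelogram function f : F → ℂ such that f∘ε₃(a,b,c) = Φ(σ(a), σ(b), σ(c)) for all a, b, c ∈ F. -/
/-- The abelianization map of the free group of rank `n`, sending a word to its
vector of exponent sums. -/
noncomputable def expSum (n : ℕ) : FreeGroup (Fin n) →* Multiplicative (Fin n → ℤ) :=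
  FreeGroup.lift fun i => Multiplicative.ofAdd (Pi.single i 1)

section Eps3

variable {Γ : Type*} [Group Γ]

lemma lin_of (f : Γ → ℂ) (γ : Γ) : lin f (MonoidAlgebra.of ℂ Γ γ) = f γ := by
  simp [lin]

lemma eps3_eq_alternating_sum (f : Γ → ℂ) (a b c : Γ) :
    eps3 f a b c = f (a * b * c) - f (a * b) - f (a * c) - f (b * c)
      + f a + f b + f c - f 1 := by
  have hexpand : (MonoidAlgebra.of ℂ Γ a - 1) * (MonoidAlgebra.of ℂ Γ b - 1) *
      (MonoidAlgebra.of ℂ Γ c - 1)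
      = MonoidAlgebra.of ℂ Γ (a * b * c) - MonoidAlgebra.of ℂ Γ (a * b)
        - MonoidAlgebra.of ℂ Γ (a * c) - MonoidAlgebra.of ℂ Γ (b * c)
        + MonoidAlgebra.of ℂ Γ a + MonoidAlgebra.of ℂ Γ b + MonoidAlgebra.of ℂ Γ c
        - MonoidAlgebra.of ℂ Γ 1 := by
    simp only [map_mul, map_one]
    noncomm_ring
  simp only [eps3, hexpand, map_sub, map_add, lin_of]

end Eps3

def IsParallelogram {Γ : Type*} [Group Γ] (f : Γ → ℂ) : Prop :=
  ∀ x y, f (x * y) + f (x * y⁻¹) = 2 * f x + 2 * f y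

/-- The central extension of `A` by `T` with the bilinear cocycle `β`. -/
@[ext]
structure BilinExt {A T : Type*} [AddCommGroup A] [AddCommGroup T] (β : A →+ A →+ T) where
  base : A
  fiber : T

namespace BilinExt

variable {A T : Type*} [AddCommGroup A] [AddCommGroup T] {β : A →+ A →+ T}

instance : Group (BilinExt β) where
  mul p q := ⟨p.base + q.base, p.fiber + q.fiber + β p.base q.base⟩
  one := ⟨0, 0⟩
  inv p := ⟨-p.base, -p.fiber + β p.base p.base⟩
  mul_assoc p q r := by
    ext
    · exact add_assoc _ _ _
    · show p.fiber + q.fiber + β p.base q.base + r.fiber + β (p.base + q.base) r.base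
        = p.fiber + (q.fiber + r.fiber + β q.base r.base) + β p.base (q.base + r.base)
      simp only [map_add, AddMonoidHom.add_apply]
      abel
  one_mul p := by
    ext
    · exact zero_add _
    · show 0 + p.fiber + β 0 p.base = p.fiber
      simp
  mul_one p := by
    ext
    · exact add_zero _
    · show p.fiber + 0 + β p.base 0 = p.fiber
      simp
  inv_mul_cancel p := by
    ext
    · exact neg_add_cancel _
    · show -p.fiber + β p.base p.base + p.fiber + β (-p.base) p.base = 0
      simp only [map_neg, AddMonoidHom.neg_apply]
      abel

@[simp] lemma mul_base (p q : BilinExt β) : (p * q).base = p.base + q.base := rfl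
@[simp] lemma mul_fiber (p q : BilinExt β) :
    (p * q).fiber = p.fiber + q.fiber + β p.base q.base := rfl
@[simp] lemma one_base : (1 : BilinExt β).base = 0 := rfl
@[simp] lemma one_fiber : (1 : BilinExt β).fiber = 0 := rfl
@[simp] lemma inv_base (p : BilinExt β) : p⁻¹.base = -p.base := rfl
@[simp] lemma inv_fiber (p : BilinExt β) : p⁻¹.fiber = -p.fiber + β p.base p.base := rfl

variable (β) in
def baseHom : BilinExt β →* Multiplicative A where
  toFun p := Multiplicative.ofAdd p.base
  map_one' := rfl
  map_mul' _ _ := rfl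

lemma exists_lift_of_freeGroup {α : Type*} (σ : FreeGroup α →* Multiplicative A) :
    ∃ ρ : FreeGroup α →* BilinExt β, (baseHom β).comp ρ = σ :=
  ⟨FreeGroup.lift fun i => ⟨Multiplicative.toAdd (σ (FreeGroup.of i)), 0⟩,
    FreeGroup.ext_hom _ _ fun _ => by simp [baseHom]⟩

end BilinExt

section FiberAtBase

open BilinExt

variable {Γ A : Type*} [Group Γ] [AddCommGroup A] {Φ : A →+ A →+ A →+ ℂ}

def fiberAtBase (ρ : Γ →* BilinExt Φ) (w : Γ) : ℂ := (ρ w).fiber (ρ w).base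

variable (ρ : Γ →* BilinExt Φ)

lemma fiberAtBase_one : fiberAtBase ρ 1 = 0 := by
  simp [fiberAtBase]

lemma fiberAtBase_mul (h13 : ∀ x y, Φ x y x = 0) (h23 : ∀ x y, Φ x y y = 0) (u v : Γ) :
    fiberAtBase ρ (u * v) = fiberAtBase ρ u + fiberAtBase ρ v
      + (ρ u).fiber (ρ v).base + (ρ v).fiber (ρ u).base := by
  simp only [fiberAtBase, map_mul, mul_fiber, mul_base, map_add, AddMonoidHom.add_apply, h13, h23]
  ring

lemma isParallelogram_fiberAtBase (h12 : ∀ x z, Φ x x z = 0) (h13 : ∀ x y, Φ x y x = 0)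
    (h23 : ∀ x y, Φ x y y = 0) : IsParallelogram (fiberAtBase ρ) := by
  intro x y
  simp only [fiberAtBase_mul ρ h13 h23]
  simp only [fiberAtBase, map_inv, inv_fiber, inv_base, map_neg, AddMonoidHom.add_apply,
    AddMonoidHom.neg_apply, h12]
  ring

lemma eps3_fiberAtBase (h13 : ∀ x y, Φ x y x = 0) (h23 : ∀ x y, Φ x y y = 0) (a b c : Γ) :
    eps3 (fiberAtBase ρ) a b c = Φ (ρ a).base (ρ b).base (ρ c).base := by
  simp only [eps3_eq_alternating_sum, fiberAtBase_mul ρ h13 h23, fiberAtBase_one, map_mul,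
    mul_fiber, mul_base, map_add, AddMonoidHom.add_apply]
  ring

end FiberAtBase

theorem exists_parallelogram_realizing_alternating_form (n : ℕ)
    (Φ : (Fin n → ℤ) → (Fin n → ℤ) → (Fin n → ℤ) → ℂ)
    (hadd1 : ∀ x x' y z, Φ (x + x') y z = Φ x y z + Φ x' y z)
    (hadd2 : ∀ x y y' z, Φ x (y + y') z = Φ x y z + Φ x y' z)
    (hadd3 : ∀ x y z z', Φ x y (z + z') = Φ x y z + Φ x y z')
    (halt12 : ∀ x z, Φ x x z = 0)
    (halt23 : ∀ x y, Φ x y y = 0)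
    (halt13 : ∀ x y, Φ x y x = 0) :
    ∃ f : FreeGroup (Fin n) → ℂ,
      (∀ x y : FreeGroup (Fin n), f (x * y) + f (x * y⁻¹) = 2 * f x + 2 * f y) ∧
      (∀ a b c : FreeGroup (Fin n),
        eps3 f a b c =
          Φ (Multiplicative.toAdd (expSum n a)) (Multiplicative.toAdd (expSum n b))
            (Multiplicative.toAdd (expSum n c))) := by
  let Ψ : (Fin n → ℤ) →+ (Fin n → ℤ) →+ (Fin n → ℤ) →+ ℂ :=
    AddMonoidHom.mk' (fun x => AddMonoidHom.mk' (fun y => AddMonoidHom.mk' (Φ x y) (hadd3 x y))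
      fun y y' => AddMonoidHom.ext (hadd2 x y y'))
      fun x x' => AddMonoidHom.ext fun y => AddMonoidHom.ext (hadd1 x x' y)
  obtain ⟨ρ, hρ⟩ := BilinExt.exists_lift_of_freeGroup (β := Ψ) (expSum n)
  have hbase (w : FreeGroup (Fin n)) : (ρ w).base = Multiplicative.toAdd (expSum n w) := by
    rw [← hρ]; rfl
  refine ⟨fiberAtBase ρ, isParallelogram_fiberAtBase ρ halt12 halt13 halt23, fun a b c => ?_⟩
  rw [eps3_fiberAtBase ρ halt13 halt23, hbase, hbase, hbase]
  rfl
end
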